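/- arXiv:1003.3898 — 3 statements merged into one kernel-verified Lean document; each statement's English description precedes it below -/
import Mathlib

section
/- For fixed r > 0 and fixed u > 0, the angle function ψ_γ(u) = arccos((u² + γ² − r²)/(2uγ)) is antitone (non-increasing) in γ on the set of γ ≥ r with γ − r ≤ u ≤ γ: if r ≤ γ₂ ≤ γ₁ and u is in the common domain, then ψ_{γ₁}(u) ≤ ψ_{γ₂}(u). -/
/-! As a function of `γ`, the cosine `(u² + γ² − r²) / (2uγ) = (γ + (u² − r²) / γ) / (2u)`
is nondecreasing once `γ² ≥ u² − r²`, in particular for `γ ≥ u`; composing with the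
antitone `arccos` gives the claim. -/

lemma add_div_le_add_div_of_le_mul {a b c : ℝ} (ha : 0 < a) (hab : a ≤ b) (hc : c ≤ a * b) :
    a + c / a ≤ b + c / b := by
  have hb : 0 < b := ha.trans_le hab
  have key : b + c / b - (a + c / a) = (b - a) * (a * b - c) / (a * b) := by
    field_simp
    ring
  have : 0 ≤ (b - a) * (a * b - c) / (a * b) := by
    apply div_nonneg (mul_nonneg _ _) (mul_pos ha hb).le <;> linarith
  linarith

lemma cosine_rule_le_of_le {r u γ₁ γ₂ : ℝ} (hu : 0 < u) (hγ₂ : 0 < γ₂) (h12 : γ₂ ≤ γ₁)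
    (h : u ^ 2 - r ^ 2 ≤ γ₂ * γ₁) :
    (u ^ 2 + γ₂ ^ 2 - r ^ 2) / (2 * u * γ₂) ≤ (u ^ 2 + γ₁ ^ 2 - r ^ 2) / (2 * u * γ₁) := by
  have hγ₁ : 0 < γ₁ := hγ₂.trans_le h12
  have split : ∀ γ, 0 < γ →
      (u ^ 2 + γ ^ 2 - r ^ 2) / (2 * u * γ) = (γ + (u ^ 2 - r ^ 2) / γ) / (2 * u) := by
    intro γ hγ
    field_simp
    ring
  rw [split γ₁ hγ₁, split γ₂ hγ₂]
  exact div_le_div_of_nonneg_right (add_div_le_add_div_of_le_mul hγ₂ h12 h) (by positivity)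

theorem stmt_2_general (r u γ₁ γ₂ : ℝ) (hu : 0 < u)
    (h12 : γ₂ ≤ γ₁) (hup : u ≤ γ₂) :
    Real.arccos ((u ^ 2 + γ₁ ^ 2 - r ^ 2) / (2 * u * γ₁)) ≤
      Real.arccos ((u ^ 2 + γ₂ ^ 2 - r ^ 2) / (2 * u * γ₂)) := by
  apply Real.arccos_le_arccos
  apply cosine_rule_le_of_le hu (hu.trans_le hup) h12
  nlinarith [mul_le_mul hup (hup.trans h12) hu.le (hu.trans_le hup).le]

/-- Sink dependence: for fixed r > 0 and u > 0, the angle function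
ψ_γ(u) = arccos((u² + γ² − r²)/(2uγ)) is antitone in γ:
if r ≤ γ₂ ≤ γ₁ and u lies in the common domain (γ₁ − r ≤ u ≤ γ₂),
then ψ_{γ₁}(u) ≤ ψ_{γ₂}(u). -/
theorem stmt_2 (r u γ₁ γ₂ : ℝ) (hr : 0 < r) (hu : 0 < u)
    (h2 : r ≤ γ₂) (h12 : γ₂ ≤ γ₁) (hl : γ₁ - r ≤ u) (hup : u ≤ γ₂) :
    Real.arccos ((u ^ 2 + γ₁ ^ 2 - r ^ 2) / (2 * u * γ₁)) ≤
      Real.arccos ((u ^ 2 + γ₂ ^ 2 - r ^ 2) / (2 * u * γ₂)) :=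
  stmt_2_general r u γ₁ γ₂ hu h12 hup
end

section
/- Let r > 0, γ > r, q₀ = (4/3)√(2r/(γ(γ−r))), and Q_γ(u) = 2∫_{γ−r}^u arccos((w²+γ²−r²)/(2wγ)) dw. Then Q_γ(u) ~ q₀ (u − γ + r)^{3/2} as u → (γ−r)⁺, i.e. Q_γ(u)/(q₀ (u−γ+r)^{3/2}) → 1. -/
/-!
By the law of cosines, `1 - (w² + γ² - r²)/(2wγ) = (w - (γ - r))(γ + r - w)/(2wγ)`, and
`arccos x ~ √(2(1 - x))` as `x → 1⁻`. Hence the integrand behaves like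
`√(2r/(γ(γ - r))) · (w - (γ - r))^{1/2}` near `γ - r`, and integrating this power law
(L'Hôpital's rule) gives the factor `2/3`; with the factor `2` in `Q_γ` this is `q₀`.
-/

open Real Filter Set Topology intervalIntegral

theorem arccos_eq_two_mul_arcsin_sqrt {x : ℝ} (h₁ : -1 ≤ x) (h₂ : x ≤ 1) :
    arccos x = 2 * arcsin √((1 - x) / 2) := by
  set y := √((1 - x) / 2)
  have hy0 : 0 ≤ y := sqrt_nonneg _
  have hy2 : y ^ 2 = (1 - x) / 2 := sq_sqrt (by linarith)
  have hcos : cos (2 * arcsin y) = x := by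
    rw [cos_two_mul, cos_arcsin]
    nlinarith [sq_sqrt (show 0 ≤ 1 - y ^ 2 by nlinarith)]
  rw [← hcos, arccos_cos (by linarith [arcsin_nonneg.2 hy0])
    (by linarith [arcsin_le_pi_div_two y, pi_pos])]

theorem tendsto_arccos_div_sqrt_nhdsLT_one :
    Tendsto (fun x => arccos x / √(2 * (1 - x))) (𝓝[<] 1) (𝓝 1) := by
  have hslope : Tendsto (fun y => arcsin y / y) (𝓝[≠] 0) (𝓝 1) := by
    have h := (hasDerivAt_arcsin (x := 0) (by norm_num) (by norm_num))
    rw [hasDerivAt_iff_tendsto_slope] at h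
    norm_num at h
    refine h.congr fun y => ?_
    simp [slope_def_field]
  have hy : Tendsto (fun x => √((1 - x) / 2)) (𝓝[<] 1) (𝓝[≠] 0) := by
    refine tendsto_nhdsWithin_of_tendsto_nhds_of_eventually_within _ ?_ ?_
    · have : ContinuousAt (fun x : ℝ => √((1 - x) / 2)) 1 := by fun_prop
      simpa using this.tendsto.mono_left nhdsWithin_le_nhds
    · filter_upwards [self_mem_nhdsWithin] with x (hx : x < 1)
      exact (sqrt_pos.2 (by linarith)).ne'
  refine (hslope.comp hy).congr' ?_
  filter_upwards [Ioo_mem_nhdsLT (show (-1 : ℝ) < 1 by norm_num)] with x hx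
  have hsq : √(2 * (1 - x)) = 2 * √((1 - x) / 2) := by
    rw [show 2 * (1 - x) = 2 ^ 2 * ((1 - x) / 2) by ring, sqrt_mul (by positivity),
      sqrt_sq zero_le_two]
  rw [Function.comp_apply, arccos_eq_two_mul_arcsin_sqrt hx.1.le hx.2.le, hsq,
    mul_div_mul_left _ _ two_ne_zero]

theorem tendsto_integral_div_rpow_of_tendsto_div_rpow {f : ℝ → ℝ} {a b p L : ℝ} (hab : a < b)
    (hp : -1 < p) (hf : ContinuousOn f (Icc a b))
    (hlim : Tendsto (fun w => f w / (w - a) ^ p) (𝓝[>] a) (𝓝 L)) :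
    Tendsto (fun u => (∫ w in a..u, f w) / (u - a) ^ (p + 1)) (𝓝[>] a) (𝓝 (L / (p + 1))) := by
  have hp1 : 0 < p + 1 := by linarith
  have hderivF : ∀ u ∈ Ioo a b, HasDerivAt (fun u => ∫ w in a..u, f w) (f u) u := fun u hu =>
    integral_hasDerivAt_right
      ((hf.mono (uIcc_of_le hu.1.le ▸ Icc_subset_Icc_right hu.2.le)).intervalIntegrable)
      ((hf.mono Ioo_subset_Icc_self).stronglyMeasurableAtFilter isOpen_Ioo u hu)
      (hf.continuousAt (Icc_mem_nhds hu.1 hu.2))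
  have hderivG : ∀ u ∈ Ioo a b, HasDerivAt (fun u => (u - a) ^ (p + 1))
      ((p + 1) * (u - a) ^ p) u := fun u hu => by
    simpa using ((hasDerivAt_id u).sub_const a).rpow_const (p := p + 1)
      (Or.inl (sub_pos.2 hu.1).ne')
  have hderivG_ne : ∀ u ∈ Ioo a b, (p + 1) * (u - a) ^ p ≠ 0 := fun u hu =>
    mul_ne_zero hp1.ne' (rpow_pos_of_pos (sub_pos.2 hu.1) p).ne'
  have hF : Tendsto (fun u => ∫ w in a..u, f w) (𝓝[>] a) (𝓝 0) := by
    have hcont := continuousOn_primitive_interval (a := a) (b := b) (μ := MeasureTheory.volume)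
      (uIcc_of_le hab.le ▸ hf.integrableOn_compact isCompact_Icc)
    rw [uIcc_of_le hab.le] at hcont
    have := hcont a (left_mem_Icc.2 hab.le)
    rw [ContinuousWithinAt, integral_same, nhdsWithin_Icc_eq_nhdsGE hab] at this
    exact this.mono_left (nhdsWithin_mono _ Ioi_subset_Ici_self)
  have hG : Tendsto (fun u => (u - a) ^ (p + 1)) (𝓝[>] a) (𝓝 0) := by
    have : ContinuousAt (fun u => (u - a) ^ (p + 1)) a :=
      (continuousAt_id.sub continuousAt_const).rpow_const (Or.inr hp1.le)
    simpa [zero_rpow hp1.ne'] using this.tendsto.mono_left nhdsWithin_le_nhds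
  refine HasDerivAt.lhopital_zero_right_on_Ioo hab hderivF hderivG hderivG_ne hF hG ?_
  simpa only [div_mul_eq_div_div_swap] using hlim.div_const (p + 1)

theorem one_sub_lawOfCosines_eq {r γ w : ℝ} (hw : w ≠ 0) (hγ : γ ≠ 0) :
    1 - (w ^ 2 + γ ^ 2 - r ^ 2) / (2 * w * γ) = (w - (γ - r)) * (γ + r - w) / (2 * w * γ) := by
  field_simp
  ring

theorem tendsto_arccos_lawOfCosines_div_sqrt {r γ : ℝ} (hr : 0 < r) (hγ : r < γ) :
    Tendsto (fun w => arccos ((w ^ 2 + γ ^ 2 - r ^ 2) / (2 * w * γ)) / (w - (γ - r)) ^ (1 / 2 : ℝ))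
      (𝓝[>] (γ - r)) (𝓝 √(2 * r / (γ * (γ - r)))) := by
  set a := γ - r with ha_def
  set g : ℝ → ℝ := fun w => (w ^ 2 + γ ^ 2 - r ^ 2) / (2 * w * γ)
  have ha : 0 < a := sub_pos.2 hγ
  have hγ0 : 0 < γ := hr.trans hγ
  have hnear : Ioo a (γ + r) ∈ 𝓝[>] a := Ioo_mem_nhdsGT (by linarith)
  have hg : Tendsto g (𝓝[>] a) (𝓝[<] 1) := by
    refine tendsto_nhdsWithin_of_tendsto_nhds_of_eventually_within _ ?_ ?_
    · have hga : g a = 1 := by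
        rw [div_eq_one_iff_eq (by positivity)]
        ring
      have : ContinuousAt g a := by fun_prop (disch := positivity)
      exact hga ▸ this.tendsto.mono_left nhdsWithin_le_nhds
    · filter_upwards [hnear] with w hw
      have hw0 : 0 < w := ha.trans hw.1
      have hone := one_sub_lawOfCosines_eq (r := r) hw0.ne' hγ0.ne'
      have hpos : 0 < (w - a) * (γ + r - w) / (2 * w * γ) :=
        div_pos (mul_pos (sub_pos.2 hw.1) (sub_pos.2 hw.2)) (by positivity)
      show g w < 1
      linarith
  have hrest : Tendsto (fun w => √((γ + r - w) / (w * γ))) (𝓝[>] a)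
      (𝓝 √(2 * r / (γ * (γ - r)))) := by
    have : ContinuousAt (fun w => √((γ + r - w) / (w * γ))) a := by
      fun_prop (disch := positivity)
    convert this.tendsto.mono_left nhdsWithin_le_nhds using 3
    ring
  have hprod := (tendsto_arccos_div_sqrt_nhdsLT_one.comp hg).mul hrest
  rw [one_mul] at hprod
  refine hprod.congr' ?_
  filter_upwards [hnear] with w hw
  have hw0 : 0 < w := ha.trans hw.1
  have hwa : 0 < w - a := sub_pos.2 hw.1
  have hsplit : √(2 * (1 - g w)) = √(w - a) * √((γ + r - w) / (w * γ)) := by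
    rw [← sqrt_mul hwa.le, one_sub_lawOfCosines_eq hw0.ne' hγ0.ne']
    congr 1
    field_simp
    rw [ha_def]
    ring
  have hrest_pos : 0 < √((γ + r - w) / (w * γ)) :=
    sqrt_pos.2 (div_pos (by linarith [hw.2]) (by positivity))
  rw [Function.comp_apply, hsplit, ← sqrt_eq_rpow, div_mul_eq_mul_div,
    mul_div_mul_right _ _ hrest_pos.ne']

/-- Leading asymptotics of Q_γ: with q₀ = (4/3)√(2r/(γ(γ−r))),
Q_γ(u) ~ q₀ (u − γ + r)^{3/2} as u → (γ−r)⁺. -/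
theorem stmt_6 (r γ : ℝ) (hr : 0 < r) (hγ : r < γ)
    (q₀ : ℝ) (hq₀ : q₀ = (4 / 3) * Real.sqrt (2 * r / (γ * (γ - r))))
    (Q : ℝ → ℝ)
    (hQ : ∀ u, Q u =
      2 * ∫ w in (γ - r)..u, Real.arccos ((w ^ 2 + γ ^ 2 - r ^ 2) / (2 * w * γ))) :
    Filter.Tendsto (fun u => Q u / (q₀ * (u - γ + r) ^ ((3 : ℝ) / 2)))
      (nhdsWithin (γ - r) (Set.Ioi (γ - r))) (nhds 1) := by
  have hc : 0 < √(2 * r / (γ * (γ - r))) :=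
    sqrt_pos.2 (div_pos (by positivity) (mul_pos (by linarith) (by linarith)))
  have hcont : ContinuousOn (fun w => arccos ((w ^ 2 + γ ^ 2 - r ^ 2) / (2 * w * γ)))
      (Icc (γ - r) γ) := fun w hw =>
    have : 0 < w := by linarith [hw.1]
    have : 0 < γ := by linarith
    (continuous_arccos.continuousAt.comp (by fun_prop (disch := positivity))).continuousWithinAt
  have hint := tendsto_integral_div_rpow_of_tendsto_div_rpow (by linarith) (by norm_num) hcont
    (tendsto_arccos_lawOfCosines_div_sqrt hr hγ)
  convert hint.const_mul (2 / q₀) using 2 with u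
  · rw [hQ, show u - γ + r = u - (γ - r) by ring, show (1 / 2 : ℝ) + 1 = 3 / 2 by norm_num]
    ring
  · rw [hq₀]
    field_simp
    norm_num
end

section
/- Let r > 0 and let γ₁ ≥ γ₂ ≥ r with γ₂ > r. Then for every c ∈ (0, r), Q_{γ₂}(γ₂ − c) ≥ Q_{γ₁}(γ₁ − c), where Q_γ(u) = 2∫_{γ−r}^u arccos((w²+γ²−r²)/(2wγ)) dw. Consequently the hop advancements satisfy the stochastic ordering ℙ_{γ₂}(C > c) = 1 − e^{−λ Q_{γ₂}(γ₂−c)} ≥ 1 − e^{−λ Q_{γ₁}(γ₁−c)} = ℙ_{γ₁}(C > c) for every λ > 0. -/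
/-!
Substituting `w = γ - t` turns `Q_γ(γ - c)` into `2 ∫_c^r ψ_γ(t) dt` with
`ψ_γ(t) = arccos (1 - (r² - t²) / (2γ(γ - t)))`. For `0 ≤ t ≤ r < γ` the product `γ(γ - t)`
grows with `γ`, so the argument of `arccos` grows and `ψ_γ(t)` decreases pointwise in `γ`;
integrating gives the comparison of the `Q`s, and `x ↦ 1 - e^{-λx}` is monotone.
-/

open Real

/-- The paper's `ψ_γ(t)`: the integrand of `Q_γ` after the change of variable `w = γ - t`. -/
noncomputable def advanceAngle (r γ t : ℝ) : ℝ :=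
  arccos (((γ - t) ^ 2 + γ ^ 2 - r ^ 2) / (2 * (γ - t) * γ))

lemma integral_arccos_lawOfCosines_eq (r γ c : ℝ) :
    ∫ w in (γ - r)..(γ - c), arccos ((w ^ 2 + γ ^ 2 - r ^ 2) / (2 * w * γ)) =
      ∫ t in c..r, advanceAngle r γ t :=
  (intervalIntegral.integral_comp_sub_left
    (fun w => arccos ((w ^ 2 + γ ^ 2 - r ^ 2) / (2 * w * γ))) γ).symm

lemma intervalIntegrable_arccos_comp {g : ℝ → ℝ} (hg : Measurable g) (a b : ℝ) :
    IntervalIntegrable (fun t => arccos (g t)) MeasureTheory.volume a b := by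
  have hbound : ∀ t, ‖arccos (g t)‖ ≤ π := fun t => by
    rw [norm_of_nonneg (arccos_nonneg _)]
    exact arccos_le_pi _
  have hmeas := (measurable_arccos.comp hg).aestronglyMeasurable (μ := MeasureTheory.volume)
  exact ⟨.of_bound measure_Ioc_lt_top hmeas.restrict π (.of_forall hbound),
    .of_bound measure_Ioc_lt_top hmeas.restrict π (.of_forall hbound)⟩

lemma intervalIntegrable_advanceAngle (r γ a b : ℝ) :
    IntervalIntegrable (advanceAngle r γ) MeasureTheory.volume a b :=
  intervalIntegrable_arccos_comp (by fun_prop) a b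

lemma lawOfCosines_ratio_eq {r γ t : ℝ} (ht : t < γ) (hγ : 0 < γ) :
    ((γ - t) ^ 2 + γ ^ 2 - r ^ 2) / (2 * (γ - t) * γ) =
      1 - (r ^ 2 - t ^ 2) / (2 * (γ - t) * γ) := by
  have : 2 * (γ - t) * γ ≠ 0 := by nlinarith
  rw [eq_sub_iff_add_eq, ← add_div, div_eq_one_iff_eq this]
  ring

lemma advanceAngle_le_of_le {r γ₁ γ₂ t : ℝ} (ht : t ^ 2 ≤ r ^ 2) (ht0 : 0 ≤ t) (ht2 : t < γ₂)
    (h12 : γ₂ ≤ γ₁) : advanceAngle r γ₁ t ≤ advanceAngle r γ₂ t := by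
  unfold advanceAngle
  apply arccos_le_arccos
  rw [lawOfCosines_ratio_eq ht2 (by linarith), lawOfCosines_ratio_eq (by linarith) (by linarith)]
  have hpos : 0 < 2 * (γ₂ - t) * γ₂ :=
    mul_pos (mul_pos two_pos (by linarith)) (by linarith)
  have hprod : 2 * (γ₂ - t) * γ₂ ≤ 2 * (γ₁ - t) * γ₁ := by nlinarith
  exact sub_le_sub_left (div_le_div_of_nonneg_left (by linarith) hpos hprod) 1

theorem stmt_11_general (r γ₁ γ₂ : ℝ) (h2 : r < γ₂) (h12 : γ₂ ≤ γ₁)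
    (Q : ℝ → ℝ → ℝ)
    (hQ : ∀ γ u, Q γ u =
      2 * ∫ w in (γ - r)..u, Real.arccos ((w ^ 2 + γ ^ 2 - r ^ 2) / (2 * w * γ))) :
    ∀ c ∈ Set.Ioo (0 : ℝ) r,
      Q γ₁ (γ₁ - c) ≤ Q γ₂ (γ₂ - c) ∧
        ∀ lam : ℝ, 0 < lam →
          1 - Real.exp (-(lam * Q γ₁ (γ₁ - c))) ≤
            1 - Real.exp (-(lam * Q γ₂ (γ₂ - c))) := by
  rintro c ⟨hc0, hcr⟩
  have hQ_le : Q γ₁ (γ₁ - c) ≤ Q γ₂ (γ₂ - c) := by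
    rw [hQ, hQ, integral_arccos_lawOfCosines_eq, integral_arccos_lawOfCosines_eq]
    gcongr 2 * ?_
    refine intervalIntegral.integral_mono_on hcr.le (intervalIntegrable_advanceAngle ..)
      (intervalIntegrable_advanceAngle ..) fun t ht => ?_
    have ht0 : 0 ≤ t := by linarith [ht.1]
    exact advanceAngle_le_of_le (by nlinarith [ht.2]) ht0 (by linarith [ht.2]) h12
  exact ⟨hQ_le, fun lam hlam => by gcongr⟩

/-- Stochastic ordering of hop advancements (inequality (32)): for r ≤ γ₂ ≤ γ₁
with γ₂ > r and c ∈ (0, r), Q_{γ₂}(γ₂ − c) ≥ Q_{γ₁}(γ₁ − c), hence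
1 − e^{−λQ_{γ₂}(γ₂−c)} ≥ 1 − e^{−λQ_{γ₁}(γ₁−c)} for every λ > 0. -/
theorem stmt_11 (r γ₁ γ₂ : ℝ) (hr : 0 < r) (h2 : r < γ₂) (h12 : γ₂ ≤ γ₁)
    (Q : ℝ → ℝ → ℝ)
    (hQ : ∀ γ u, Q γ u =
      2 * ∫ w in (γ - r)..u, Real.arccos ((w ^ 2 + γ ^ 2 - r ^ 2) / (2 * w * γ))) :
    ∀ c ∈ Set.Ioo (0 : ℝ) r,
      Q γ₁ (γ₁ - c) ≤ Q γ₂ (γ₂ - c) ∧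
        ∀ lam : ℝ, 0 < lam →
          1 - Real.exp (-(lam * Q γ₁ (γ₁ - c))) ≤
            1 - Real.exp (-(lam * Q γ₂ (γ₂ - c))) :=
  stmt_11_general r γ₁ γ₂ h2 h12 Q hQ
end
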